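/- Let B be the bipath poset with the shift ℝ-action Λ, and let I, J be intervals of B. If the interval modules k_I and k_J are Λ_ε-interleaved for some ε ≥ 0, then either I and J are of the same type (among U, D, B, L, R), or both k_I and k_J are Λ_{2ε}-trivial. -/

import Mathlib

open CategoryTheory NNReal

/-- The upset `C^↑` generated by a subset of a poset. -/
def genUpset {P : Type} [PartialOrder P] (C : Set P) : Set P := {p | ∃ a ∈ C, a ≤ p}

/-- The downset `C^↓` generated by a subset of a poset. -/
def genDownset {P : Type} [PartialOrder P] (C : Set P) : Set P := {p | ∃ a ∈ C, p ≤ a}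

/-- Convexity of a subset of a poset. -/
def IsOrdConvex {P : Type} [PartialOrder P] (C : Set P) : Prop :=
  ∀ ⦃p q r : P⦄, p ∈ C → q ∈ C → p ≤ r → r ≤ q → r ∈ C

/-- Connectivity of a subset of a poset: any two elements are joined by a
fence of pairwise comparable elements inside the subset. -/
def IsFenceConnected {P : Type} [PartialOrder P] (C : Set P) : Prop :=
  ∀ ⦃p⦄, p ∈ C → ∀ ⦃q⦄, q ∈ C →
    Relation.ReflTransGen (fun a b => a ∈ C ∧ b ∈ C ∧ (a ≤ b ∨ b ≤ a)) p q

/-- An interval of a poset: a convex and connected subset. -/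
def IsItv {P : Type} [PartialOrder P] (C : Set P) : Prop :=
  IsOrdConvex C ∧ IsFenceConnected C

/-- `C` is a connected component of the subset `S` of a poset. -/
def IsFenceComponent {P : Type} [PartialOrder P] (S C : Set P) : Prop :=
  ∃ p ∈ S, C = {q | q ∈ S ∧
    Relation.ReflTransGen (fun a b => a ∈ S ∧ b ∈ S ∧ (a ≤ b ∨ b ≤ a)) p q}

attribute [local instance] Classical.propDecidable

/-- The interval module `k_I` attached to a convex subset `I` of a poset `P`:
it is `k` (here presented as `PLift (p ∈ I) → k`) at points of `I` with
identity structure maps inside `I`, and `0` elsewhere. -/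
noncomputable def itvMod (k : Type) [Field k] {P : Type} [PartialOrder P]
    (I : Set P) (hI : IsOrdConvex I) : P ⥤ ModuleCat k where
  obj p := ModuleCat.of k (PLift (p ∈ I) → k)
  map {p q} _ := ModuleCat.ofHom
    { toFun := fun v _ => if hp : p ∈ I then v ⟨hp⟩ else 0
      map_add' := by
        intro v w; funext hq; by_cases hp : p ∈ I <;> simp [hp]
        all_goals first | rfl | exact (add_zero (0:k)).symm
      map_smul' := by
        intro c v; funext hq; by_cases hp : p ∈ I <;> simp [hp]
        all_goals first | rfl | exact (smul_zero c).symm }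
  map_id p := by
    apply ModuleCat.hom_ext; apply LinearMap.ext; intro v; funext hq
    rcases hq with ⟨hq⟩
    simp [hq] <;> try rfl
  map_comp {p q r} f g := by
    apply ModuleCat.hom_ext; apply LinearMap.ext; intro v; funext hr
    rcases hr with ⟨hr⟩
    by_cases hp : p ∈ I
    · have hq : q ∈ I := hI hp hr (leOfHom f) (leOfHom g)
      simp [hp, hq] <;> try rfl
    · by_cases hq : q ∈ I <;> simp [hp, hq] <;> try rfl

/-- An `ℝ`-action on a poset: a family of poset automorphisms `Λ_ε` (ε ≥ 0)
with `p ≤ Λ_ε p`, `Λ_0 = id` and `Λ_{ε+ζ} = Λ_ε ∘ Λ_ζ`. -/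
structure RAction (P : Type) [PartialOrder P] where
  iso : ℝ≥0 → P ≃o P
  le_iso : ∀ (ε : ℝ≥0) (p : P), p ≤ iso ε p
  iso_zero : iso 0 = OrderIso.refl P
  iso_add : ∀ (ε ζ : ℝ≥0) (p : P), iso (ε + ζ) p = iso ε (iso ζ p)

/-- The `ε`-thickening `Ex_ε(A) = Λ_{-ε}(A)^↑ ∩ Λ_ε(A)^↓`. -/
def RAction.thicken {P : Type} [PartialOrder P] (A : RAction P) (ε : ℝ≥0)
    (S : Set P) : Set P :=
  genUpset ((A.iso ε).symm '' S) ∩ genDownset ((A.iso ε) '' S)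

/-- A `Λ_ε`-interleaving between persistence modules `V` and `W` over `P`,
expressed componentwise: natural transformations `α : V → W(ε)` and
`β : W → V(ε)` with `β(ε) ∘ α = V_{0→2ε}` and `α(ε) ∘ β = W_{0→2ε}`. -/
def RAction.Interleaved {P : Type} [PartialOrder P] (k : Type) [Field k]
    (A : RAction P) (ε : ℝ≥0) (V W : P ⥤ ModuleCat k) : Prop :=
  ∃ (α : ∀ p : P, V.obj p ⟶ W.obj (A.iso ε p))
    (β : ∀ p : P, W.obj p ⟶ V.obj (A.iso ε p)),
    (∀ (p q : P) (h : p ≤ q),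
      V.map (homOfLE h) ≫ α q = α p ≫ W.map (homOfLE ((A.iso ε).monotone h))) ∧
    (∀ (p q : P) (h : p ≤ q),
      W.map (homOfLE h) ≫ β q = β p ≫ V.map (homOfLE ((A.iso ε).monotone h))) ∧
    (∀ p : P, α p ≫ β (A.iso ε p) =
      V.map (homOfLE ((A.le_iso ε p).trans (A.le_iso ε (A.iso ε p))))) ∧
    (∀ p : P, β p ≫ α (A.iso ε p) =
      W.map (homOfLE ((A.le_iso ε p).trans (A.le_iso ε (A.iso ε p)))))

/-- `V` is `Λ_ε`-trivial if the canonical morphism `V → V(ε)` vanishes. -/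
def RAction.IsTrivial {P : Type} [PartialOrder P] (k : Type) [Field k]
    (A : RAction P) (ε : ℝ≥0) (V : P ⥤ ModuleCat k) : Prop :=
  ∀ p : P, V.map (homOfLE (A.le_iso ε p)) = 0

/-- The (continuous) bipath poset `B`: two copies of `ℝ` (`up` and `down`)
joined at a global minimum `-∞` (`bot`) and a global maximum `+∞` (`top`),
with the two copies of `ℝ` mutually incomparable. -/
inductive Bipath : Type
  | bot : Bipath
  | top : Bipath
  | up : ℝ → Bipath
  | down : ℝ → Bipath

namespace Bipath

/-- The order relation of the bipath poset. -/
def le : Bipath → Bipath → Prop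
  | bot, _ => True
  | _, top => True
  | up r, up s => r ≤ s
  | down r, down s => r ≤ s
  | _, _ => False

instance : PartialOrder Bipath where
  le := Bipath.le
  le_refl x := by cases x <;> simp [Bipath.le]
  le_trans x y z hxy hyz := by
    cases x <;> cases y <;> cases z <;> simp_all [Bipath.le] <;> linarith
  le_antisymm x y h1 h2 := by
    cases x <;> cases y <;> simp_all [Bipath.le] <;> linarith

theorem le_iff (x y : Bipath) : x ≤ y ↔ Bipath.le x y := Iff.rfl

/-- Shifting the bipath poset by `ε`: real coordinates are translated by `ε`
and `±∞` are fixed. -/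
def shift (ε : ℝ) : Bipath → Bipath
  | bot => bot
  | top => top
  | up r => up (r + ε)
  | down r => down (r + ε)

theorem shift_mono (ε : ℝ) : Monotone (shift ε) := by
  intro x y h
  cases x <;> cases y <;> simp_all [shift, le_iff, Bipath.le]

theorem le_shift (ε : ℝ) (hε : 0 ≤ ε) (p : Bipath) : p ≤ shift ε p := by
  cases p <;> simp [shift, le_iff, Bipath.le] <;> linarith

theorem shift_neg_shift (ε : ℝ) (p : Bipath) : shift (-ε) (shift ε p) = p := by
  cases p <;> simp [shift]

/-- The shift by `ε` as an order isomorphism of the bipath poset. -/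
def shiftIso (ε : ℝ) : Bipath ≃o Bipath where
  toFun := shift ε
  invFun := shift (-ε)
  left_inv p := by cases p <;> simp [shift]
  right_inv p := by cases p <;> simp [shift]
  map_rel_iff' := by
    intro p q
    constructor
    · intro h
      have h2 := shift_mono (-ε) h
      simp only [Equiv.coe_fn_mk] at h2
      rwa [shift_neg_shift, shift_neg_shift] at h2
    · exact fun h => shift_mono ε h

end Bipath

/-- The shift `ℝ`-action on the bipath poset. -/
def bipathAction : RAction Bipath where
  iso ε := Bipath.shiftIso (ε : ℝ)
  le_iso ε p := Bipath.le_shift (ε : ℝ) ε.coe_nonneg p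
  iso_zero := by
    ext p
    cases p <;> simp [Bipath.shiftIso, Bipath.shift]
  iso_add ε ζ p := by
    cases p <;> simp [Bipath.shiftIso, Bipath.shift] <;> push_cast <;> ring

/-- Type `U`: intervals contained in the first copy of `ℝ`. -/
def typeU (I : Set Bipath) : Prop := I ⊆ Set.range Bipath.up

/-- Type `D`: intervals contained in the second copy of `ℝ`. -/
def typeD (I : Set Bipath) : Prop := I ⊆ Set.range Bipath.down

/-- Type `B`: the whole bipath poset. -/
def typeB (I : Set Bipath) : Prop := I = Set.univ

/-- Type `L`: intervals containing `-∞` other than the whole poset. -/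
def typeL (I : Set Bipath) : Prop := Bipath.bot ∈ I ∧ I ≠ Set.univ

/-- Type `R`: intervals containing `+∞` other than the whole poset. -/
def typeR (I : Set Bipath) : Prop := Bipath.top ∈ I ∧ I ≠ Set.univ

/-- Two subsets of the bipath poset are of the same type. -/
def SameType (I J : Set Bipath) : Prop :=
  (typeU I ∧ typeU J) ∨ (typeD I ∧ typeD J) ∨ (typeB I ∧ typeB J) ∨
    (typeL I ∧ typeL J) ∨ (typeR I ∧ typeR J)

section Aux

variable {k : Type} [Field k]

lemma Bipath.bot_le' (x : Bipath) : Bipath.bot ≤ x := by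
  cases x <;> simp [Bipath.le_iff, Bipath.le]

lemma Bipath.le_top' (x : Bipath) : x ≤ Bipath.top := by
  cases x <;> simp [Bipath.le_iff, Bipath.le]

lemma bipathIso_bot (ε : ℝ≥0) : bipathAction.iso ε Bipath.bot = Bipath.bot := rfl

lemma bipathIso_top (ε : ℝ≥0) : bipathAction.iso ε Bipath.top = Bipath.top := rfl

lemma bipathIso_up (ε : ℝ≥0) (r : ℝ) :
    bipathAction.iso ε (Bipath.up r) = Bipath.up (r + ε) := rfl

lemma bipathIso_down (ε : ℝ≥0) (r : ℝ) :
    bipathAction.iso ε (Bipath.down r) = Bipath.down (r + ε) := rfl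

lemma interleaved_symm {P : Type} [PartialOrder P] (A : RAction P) (ε : ℝ≥0)
    {V W : P ⥤ ModuleCat k} (h : A.Interleaved k ε V W) : A.Interleaved k ε W V := by
  obtain ⟨α, β, h1, h2, h3, h4⟩ := h
  exact ⟨β, α, h2, h1, h4, h3⟩

lemma sameType_symm {I J : Set Bipath} (h : SameType I J) : SameType J I := by
  unfold SameType at *; tauto

lemma itvMod_trivial {I : Set Bipath} (hI : IsOrdConvex I) (ε : ℝ≥0)
    (h : ∀ p : Bipath, ¬(p ∈ I ∧ bipathAction.iso ε p ∈ I)) :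
    bipathAction.IsTrivial k ε (itvMod k I hI) := by
  intro p
  apply ModuleCat.hom_ext; apply LinearMap.ext; intro v; funext hq
  rcases hq with ⟨hq⟩
  by_cases hp : p ∈ I
  · exact absurd ⟨hp, hq⟩ (h p)
  · simp [itvMod, hp]
    rfl

lemma mid_mem {I J : Set Bipath} (hI : IsOrdConvex I) (hJ : IsOrdConvex J) {ε : ℝ≥0}
    (h : bipathAction.Interleaved k ε (itvMod k I hI) (itvMod k J hJ))
    {p : Bipath} (hp : p ∈ I)
    (hp2 : bipathAction.iso ε (bipathAction.iso ε p) ∈ I) :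
    bipathAction.iso ε p ∈ J := by
  obtain ⟨α, β, -, -, hβα, -⟩ := h
  by_contra hq
  have h1 := LinearMap.congr_fun (congrArg ModuleCat.Hom.hom (hβα p)) (fun _ => (1 : k))
  have hz : (α p).hom (fun _ => (1 : k)) = 0 := by
    funext x; exact absurd x.down hq
  have hL : (α p ≫ β (bipathAction.iso ε p)).hom (fun _ => (1 : k)) = 0 := by
    show (β (bipathAction.iso ε p)).hom ((α p).hom (fun _ => (1 : k))) = 0
    rw [hz, map_zero]
  rw [hL] at h1
  have h2 := congrFun h1.symm ⟨hp2⟩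
  simp only [itvMod, ModuleCat.hom_ofHom, LinearMap.coe_mk, AddHom.coe_mk, dif_pos hp] at h2
  exact one_ne_zero h2

lemma step_up {S : Set Bipath} (hbot : Bipath.bot ∉ S) (htop : Bipath.top ∉ S)
    {s : ℝ} {b : Bipath} (hb : b ∈ S)
    (hcb : Bipath.up s ≤ b ∨ b ≤ Bipath.up s) : b ∈ Set.range Bipath.up := by
  cases b with
  | bot => exact absurd hb hbot
  | top => exact absurd hb htop
  | up t => exact ⟨t, rfl⟩
  | down t => rcases hcb with h | h <;> exact h.elim

lemma step_down {S : Set Bipath} (hbot : Bipath.bot ∉ S) (htop : Bipath.top ∉ S)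
    {s : ℝ} {b : Bipath} (hb : b ∈ S)
    (hcb : Bipath.down s ≤ b ∨ b ≤ Bipath.down s) : b ∈ Set.range Bipath.down := by
  cases b with
  | bot => exact absurd hb hbot
  | top => exact absurd hb htop
  | down t => exact ⟨t, rfl⟩
  | up t => rcases hcb with h | h <;> exact h.elim

lemma fence_up {S : Set Bipath} (hbot : Bipath.bot ∉ S) (htop : Bipath.top ∉ S)
    {a b : Bipath}
    (h : Relation.ReflTransGen (fun a b => a ∈ S ∧ b ∈ S ∧ (a ≤ b ∨ b ≤ a)) a b)
    (ha : a ∈ Set.range Bipath.up) : b ∈ Set.range Bipath.up := by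
  induction h with
  | refl => exact ha
  | tail h1 step ih =>
    obtain ⟨s, rfl⟩ := ih
    obtain ⟨hc, hb, hcb⟩ := step
    exact step_up hbot htop hb hcb

lemma fence_down {S : Set Bipath} (hbot : Bipath.bot ∉ S) (htop : Bipath.top ∉ S)
    {a b : Bipath}
    (h : Relation.ReflTransGen (fun a b => a ∈ S ∧ b ∈ S ∧ (a ≤ b ∨ b ≤ a)) a b)
    (ha : a ∈ Set.range Bipath.down) : b ∈ Set.range Bipath.down := by
  induction h with
  | refl => exact ha
  | tail h1 step ih =>
    obtain ⟨s, rfl⟩ := ih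
    obtain ⟨hc, hb, hcb⟩ := step
    exact step_down hbot htop hb hcb

lemma conv_univ {S : Set Bipath} (hS : IsOrdConvex S) (hb : Bipath.bot ∈ S)
    (ht : Bipath.top ∈ S) : S = Set.univ :=
  Set.eq_univ_of_forall fun x => hS hb ht (Bipath.bot_le' x) (Bipath.le_top' x)

lemma sameType_of_witness {I J : Set Bipath} (hI : IsItv I) (hJ : IsItv J) {ε : ℝ≥0}
    (h : bipathAction.Interleaved k ε (itvMod k I hI.1) (itvMod k J hJ.1))
    {p : Bipath} (hp : p ∈ I)
    (hp2 : bipathAction.iso ε (bipathAction.iso ε p) ∈ I) : SameType I J := by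
  have h' := interleaved_symm (k := k) _ _ h
  have hmidJ : ∀ q : Bipath, q ∈ J →
      bipathAction.iso ε (bipathAction.iso ε q) ∈ J → bipathAction.iso ε q ∈ I :=
    fun q hq hq2 => mid_mem hJ.1 hI.1 h' hq hq2
  have hmidI : ∀ q : Bipath, q ∈ I →
      bipathAction.iso ε (bipathAction.iso ε q) ∈ I → bipathAction.iso ε q ∈ J :=
    fun q hq hq2 => mid_mem hI.1 hJ.1 h hq hq2
  have hbIJ : Bipath.bot ∈ I → Bipath.bot ∈ J := by
    intro hb
    have := hmidI Bipath.bot hb (by rw [bipathIso_bot, bipathIso_bot]; exact hb)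
    rwa [bipathIso_bot] at this
  have hbJI : Bipath.bot ∈ J → Bipath.bot ∈ I := by
    intro hb
    have := hmidJ Bipath.bot hb (by rw [bipathIso_bot, bipathIso_bot]; exact hb)
    rwa [bipathIso_bot] at this
  have htIJ : Bipath.top ∈ I → Bipath.top ∈ J := by
    intro ht
    have := hmidI Bipath.top ht (by rw [bipathIso_top, bipathIso_top]; exact ht)
    rwa [bipathIso_top] at this
  have htJI : Bipath.top ∈ J → Bipath.top ∈ I := by
    intro ht
    have := hmidJ Bipath.top ht (by rw [bipathIso_top, bipathIso_top]; exact ht)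
    rwa [bipathIso_top] at this
  by_cases hbI : Bipath.bot ∈ I
  · by_cases htI : Bipath.top ∈ I
    · exact Or.inr (Or.inr (Or.inl ⟨conv_univ hI.1 hbI htI,
        conv_univ hJ.1 (hbIJ hbI) (htIJ htI)⟩))
    · refine Or.inr (Or.inr (Or.inr (Or.inl ⟨⟨hbI, ?_⟩, ⟨hbIJ hbI, ?_⟩⟩)))
      · intro hu; exact htI (hu ▸ Set.mem_univ _)
      · intro hu
        exact htI (htJI (hu ▸ Set.mem_univ _))
  · by_cases htI : Bipath.top ∈ I
    · refine Or.inr (Or.inr (Or.inr (Or.inr ⟨⟨htI, ?_⟩, ⟨htIJ htI, ?_⟩⟩)))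
      · intro hu; exact hbI (hu ▸ Set.mem_univ _)
      · intro hu
        exact hbI (hbJI (hu ▸ Set.mem_univ _))
    · -- neither bot nor top in I; hence nor in J
      have hbJ : Bipath.bot ∉ J := fun hb => hbI (hbJI hb)
      have htJ : Bipath.top ∉ J := fun ht => htI (htJI ht)
      have hmem : bipathAction.iso ε p ∈ J := hmidI p hp hp2
      cases p with
      | bot => exact absurd hp hbI
      | top => exact absurd hp htI
      | up r =>
        left
        refine ⟨fun q hq => fence_up hbI htI (hI.2 hp hq) ⟨r, rfl⟩, ?_⟩
        intro q hq
        exact fence_up hbJ htJ (hJ.2 hmem hq) ⟨r + ε, rfl⟩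
      | down r =>
        right; left
        refine ⟨fun q hq => fence_down hbI htI (hI.2 hp hq) ⟨r, rfl⟩, ?_⟩
        intro q hq
        exact fence_down hbJ htJ (hJ.2 hmem hq) ⟨r + ε, rfl⟩

end Aux
/-- If the interval modules of two intervals of the bipath poset are
`Λ_ε`-interleaved, then the intervals are of the same type, or both interval
modules are `Λ_{2ε}`-trivial. -/
theorem sameType_or_trivial_of_interleaved (k : Type) [Field k]
    {I J : Set Bipath} (hI : IsItv I) (hJ : IsItv J) (ε : ℝ≥0)
    (h : bipathAction.Interleaved k ε (itvMod k I hI.1) (itvMod k J hJ.1)) :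
    SameType I J ∨
      (bipathAction.IsTrivial k (2 * ε) (itvMod k I hI.1) ∧
        bipathAction.IsTrivial k (2 * ε) (itvMod k J hJ.1)) := by
  have hsplit : ∀ p : Bipath,
      bipathAction.iso (2 * ε) p = bipathAction.iso ε (bipathAction.iso ε p) := by
    intro p
    rw [two_mul, bipathAction.iso_add]
  by_cases hIw : ∃ p : Bipath, p ∈ I ∧ bipathAction.iso (2 * ε) p ∈ I
  · obtain ⟨p, hp, hp2⟩ := hIw
    rw [hsplit] at hp2
    exact Or.inl (sameType_of_witness hI hJ h hp hp2)
  · by_cases hJw : ∃ p : Bipath, p ∈ J ∧ bipathAction.iso (2 * ε) p ∈ J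
    · obtain ⟨p, hp, hp2⟩ := hJw
      rw [hsplit] at hp2
      exact Or.inl (sameType_symm
        (sameType_of_witness hJ hI (interleaved_symm _ _ h) hp hp2))
    · push_neg at hIw hJw
      right
      constructor
      · exact itvMod_trivial hI.1 (2 * ε) fun p hp => hIw p hp.1 hp.2
      · exact itvMod_trivial hJ.1 (2 * ε) fun p hp => hJw p hp.1 hp.2
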